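/- For integers v ≥ 1 and 1 ≤ t ≤ k, the rank over ℝ of the t-inclusion matrix M_t(v,k) is at most ∑_{i=0}^{t} C(k,i)·(v−1)^i; equivalently, the columns C_y of M_t(v,k) with L_y ≤ t span the column space of M_t(v,k). -/

import Mathlib

/-- The `t`-inclusion matrix `M_t(v,k)`: columns are indexed by `k`-tuples
`x : Fin k → Fin v`; rows are indexed by pairs `(I, u)` where `I` is a
`t`-element subset of `Fin k` and `u : Fin k → Fin v` is considered only
through its values on `I`.  The entry in row `(I,u)` and column `x` is `1`
if `x i = u i` for every `i ∈ I`, and `0` otherwise. -/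
def inclusionMatrix (v k t : ℕ) :
    Matrix ({I : Finset (Fin k) // I.card = t} × (Fin k → Fin v))
      (Fin k → Fin v) ℝ :=
  fun r x => if ∀ i ∈ r.1.1, x i = r.2 i then 1 else 0

/-- `L x` is the number of coordinates of `x` that are nonzero. -/
def Lwt {v k : ℕ} (x : Fin k → Fin v) : ℕ :=
  (Finset.univ.filter fun i => (x i : ℕ) ≠ 0).card

/-!
A row of `M_t(v,k)` depends on at most `t` coordinates of the column index. For such a matrix,
take a column `x` of weight `> t` and a set `S` of `t + 1` coordinates where `x` is nonzero.
Each row ignores some `j ∈ S`, so the alternating sum over `T ⊆ S` of the columns obtained from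
`x` by zeroing the coordinates in `T` vanishes. This writes the column of `x` through columns
of smaller weight, and induction on the weight shows that the columns of weight `≤ t` span.
There are `C(k,i) (v-1)^i` vectors of weight `i`, counted by their support.
-/

open Finset Submodule

theorem Finset.sum_powerset_neg_one_pow_card_zsmul_eq_zero {ι M : Type*} [DecidableEq ι]
    [AddCommGroup M] {S : Finset ι} {j : ι} (hj : j ∈ S) {f : Finset ι → M}
    (hf : ∀ T ⊆ S.erase j, f (insert j T) = f T) :
    ∑ T ∈ S.powerset, (-1 : ℤ) ^ #T • f T = 0 := by
  rw [← insert_erase hj, sum_powerset_insert (notMem_erase j S), ← sum_add_distrib]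
  refine sum_eq_zero fun T hT => ?_
  have hjT : j ∉ T := fun h => notMem_erase j S (mem_powerset.mp hT h)
  rw [card_insert_of_notMem hjT, pow_succ, mul_neg_one, neg_smul, hf T (mem_powerset.mp hT),
    add_neg_cancel]

section HammingWeight

variable {ι β : Type*} [Fintype ι] [DecidableEq ι] [Zero β] [DecidableEq β]

theorem hammingNorm_piecewise_zero_lt {x : ι → β} {T : Finset ι} (hT : T.Nonempty)
    (hTx : ∀ i ∈ T, x i ≠ 0) :
    hammingNorm (T.piecewise (0 : ι → β) x) < hammingNorm x := by
  have hsupp : ({i | T.piecewise (0 : ι → β) x i ≠ 0} : Finset ι) =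
      ({i | x i ≠ 0} : Finset ι) \ T := by
    ext i
    by_cases hi : i ∈ T <;> simp [hi]
  rw [hammingNorm, hammingNorm, hsupp]
  exact card_lt_card (sdiff_ssubset (fun i hi => by simpa using hTx i hi) hT)

variable [Fintype β]

theorem card_filter_support_eq (S : Finset ι) :
    #{x : ι → β | ({i | x i ≠ 0} : Finset ι) = S} = (Fintype.card β - 1) ^ #S := by
  have hpi : ({x : ι → β | ({i | x i ≠ 0} : Finset ι) = S} : Finset (ι → β)) =
      Fintype.piFinset fun i => if i ∈ S then univ.erase 0 else {0} := by
    ext x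
    simp only [mem_filter, mem_univ, true_and, Fintype.mem_piFinset, Finset.ext_iff]
    refine forall_congr' fun i => ?_
    by_cases hi : i ∈ S <;> simp [hi]
  rw [hpi, Fintype.card_piFinset]
  simp only [apply_ite card, card_erase_of_mem (mem_univ _), card_univ, card_singleton]
  rw [prod_ite_mem, univ_inter, prod_const]

theorem card_filter_hammingNorm_eq (n : ℕ) :
    #{x : ι → β | hammingNorm x = n} =
      (Fintype.card ι).choose n * (Fintype.card β - 1) ^ n := by
  rw [card_eq_sum_card_fiberwise (f := fun x : ι → β => ({i | x i ≠ 0} : Finset ι))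
    (s := {x | hammingNorm x = n}) (t := powersetCard n univ)
    fun x hx => mem_powersetCard_univ.mpr (mem_filter.mp hx).2]
  have hfiber : ∀ S ∈ powersetCard n (univ : Finset ι),
      #{x ∈ ({x | hammingNorm x = n} : Finset (ι → β)) | ({i | x i ≠ 0} : Finset ι) = S} =
        (Fintype.card β - 1) ^ n := by
    intro S hS
    rw [filter_filter, ← mem_powersetCard_univ.mp hS, ← card_filter_support_eq S]
    congr 1
    refine filter_congr fun x _ => and_iff_right_of_imp fun hx => ?_
    rw [hammingNorm, hx]
  rw [sum_congr rfl hfiber, sum_const, card_powersetCard, card_univ, smul_eq_mul]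

theorem card_filter_hammingNorm_le (t : ℕ) :
    #{x : ι → β | hammingNorm x ≤ t} =
      ∑ n ∈ range (t + 1), (Fintype.card ι).choose n * (Fintype.card β - 1) ^ n := by
  rw [card_eq_sum_card_fiberwise (f := hammingNorm) (t := range (t + 1))
    fun x hx => mem_range.mpr (Nat.lt_succ_of_le (mem_filter.mp hx).2)]
  refine sum_congr rfl fun n hn => ?_
  rw [filter_filter, ← card_filter_hammingNorm_eq]
  congr 1
  exact filter_congr fun x _ =>
    and_iff_right_of_imp fun hx => hx ▸ Nat.le_of_lt_succ (mem_range.mp hn)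

end HammingWeight

namespace Matrix

variable {m ι β : Type*} [DecidableEq ι] [Zero β] {t : ℕ}

section Ring

variable {R : Type*} [Ring R] {A : Matrix m (ι → β) R}

theorem sum_powerset_zsmul_col_piecewise_eq_zero
    (hA : ∀ r, ∃ I : Finset ι, #I ≤ t ∧ DependsOn (A r) I) (x : ι → β) {S : Finset ι}
    (hS : t < #S) :
    ∑ T ∈ S.powerset, (-1 : ℤ) ^ #T • A.col (T.piecewise (0 : ι → β) x) = 0 := by
  funext r
  obtain ⟨I, hIt, hdep⟩ := hA r
  obtain ⟨j, hjS, hjI⟩ := exists_mem_notMem_of_card_lt_card (hIt.trans_lt hS)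
  simp only [Finset.sum_apply, Pi.smul_apply, col_apply, Pi.zero_apply]
  refine sum_powerset_neg_one_pow_card_zsmul_eq_zero hjS fun T _ => hdep fun i hi => ?_
  exact piecewise_insert_of_ne _ _ _ fun hij => hjI (hij ▸ hi)

variable [Fintype ι] [DecidableEq β]

theorem col_mem_span_col_hammingNorm_le
    (hA : ∀ r, ∃ I : Finset ι, #I ≤ t ∧ DependsOn (A r) I) (x : ι → β) :
    A.col x ∈ span R (A.col '' {y | hammingNorm y ≤ t}) := by
  induction hw : hammingNorm x using Nat.strong_induction_on generalizing x with
  | _ w ih =>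
  by_cases hxt : hammingNorm x ≤ t
  · exact subset_span ⟨x, hxt, rfl⟩
  obtain ⟨S, hSx, hSt⟩ := exists_subset_card_eq (Nat.succ_le_of_lt (not_le.mp hxt))
  have hsum := sum_powerset_zsmul_col_piecewise_eq_zero hA x (hSt ▸ Nat.lt_succ_self t)
  rw [← add_sum_erase _ _ (empty_mem_powerset S), card_empty, pow_zero, one_smul,
    piecewise_empty] at hsum
  rw [eq_neg_of_add_eq_zero_left hsum]
  refine neg_mem (sum_mem fun T hT => zsmul_mem (ih _ ?_ _ rfl) _)
  obtain ⟨hT, hTS⟩ := mem_erase.mp hT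
  refine hw ▸ hammingNorm_piecewise_zero_lt (nonempty_iff_ne_empty.mpr hT) fun i hi => ?_
  simpa using hSx (mem_powerset.mp hTS hi)

theorem span_col_hammingNorm_le_eq
    (hA : ∀ r, ∃ I : Finset ι, #I ≤ t ∧ DependsOn (A r) I) :
    span R (A.col '' {y | hammingNorm y ≤ t}) = span R (Set.range A.col) :=
  le_antisymm (span_mono (Set.image_subset_range _ _))
    (span_le.mpr (Set.range_subset_iff.mpr (col_mem_span_col_hammingNorm_le hA)))

end Ring

theorem rank_le_card_filter_hammingNorm_le [Fintype ι] [DecidableEq β] [Fintype β]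
    {R : Type*} [CommRing R] [Nontrivial R]
    {A : Matrix m (ι → β) R} (hA : ∀ r, ∃ I : Finset ι, #I ≤ t ∧ DependsOn (A r) I) :
    A.rank ≤ #{y : ι → β | hammingNorm y ≤ t} := by
  rw [rank_eq_finrank_span_cols, ← span_col_hammingNorm_le_eq hA, Set.image_eq_range,
    ← Fintype.card_subtype]
  exact finrank_range_le_card _

end Matrix

theorem inclusionMatrix_dependsOn {v k t : ℕ}
    (r : {I : Finset (Fin k) // I.card = t} × (Fin k → Fin v)) :
    DependsOn (inclusionMatrix v k t r) (r.1.1 : Set (Fin k)) := by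
  intro x y hxy
  simp only [inclusionMatrix]
  congr 1
  exact propext (forall₂_congr fun i hi => by rw [hxy i hi])

theorem Lwt_eq_hammingNorm {v k : ℕ} [NeZero v] (x : Fin k → Fin v) :
    Lwt x = hammingNorm x := by
  simp only [Lwt, hammingNorm, Fin.val_ne_zero_iff]

theorem rank_inclusionMatrix_le_general (v t k : ℕ) (hv : 1 ≤ v) :
    (inclusionMatrix v k t).rank ≤
        ∑ i ∈ Finset.range (t + 1), k.choose i * (v - 1) ^ i ∧
      Submodule.span ℝ
          ((fun y => fun r => inclusionMatrix v k t r y) ''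
            {y : Fin k → Fin v | Lwt y ≤ t}) =
        Submodule.span ℝ
          (Set.range fun y => fun r => inclusionMatrix v k t r y) := by
  have : NeZero v := ⟨by omega⟩
  have hrows : ∀ r, ∃ I : Finset (Fin k), #I ≤ t ∧ DependsOn (inclusionMatrix v k t r) I :=
    fun r => ⟨r.1.1, r.1.2.le, inclusionMatrix_dependsOn r⟩
  simp only [Lwt_eq_hammingNorm]
  refine ⟨?_, Matrix.span_col_hammingNorm_le_eq hrows⟩
  calc (inclusionMatrix v k t).rank ≤ #{y : Fin k → Fin v | hammingNorm y ≤ t} :=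
        Matrix.rank_le_card_filter_hammingNorm_le hrows
    _ = ∑ i ∈ range (t + 1), k.choose i * (v - 1) ^ i := by
        rw [card_filter_hammingNorm_le, Fintype.card_fin, Fintype.card_fin]

theorem rank_inclusionMatrix_le (v t k : ℕ) (hv : 1 ≤ v) (ht : 1 ≤ t) (htk : t ≤ k) :
    (inclusionMatrix v k t).rank ≤
        ∑ i ∈ Finset.range (t + 1), k.choose i * (v - 1) ^ i ∧
      Submodule.span ℝ
          ((fun y => fun r => inclusionMatrix v k t r y) ''
            {y : Fin k → Fin v | Lwt y ≤ t}) =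
        Submodule.span ℝ
          (Set.range fun y => fun r => inclusionMatrix v k t r y) :=
  rank_inclusionMatrix_le_general v t k hv
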